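/- arXiv:math-ph/0212032 — 6 statements merged into one kernel-verified Lean document; each statement's English description precedes it below -/
import Mathlib

section
/- Let R be a commutative ring, M an R-module, and B : M →ₗ[R] M →ₗ[R] R a bilinear form. For x ∈ M define the Chevalley operator γₓ on the exterior algebra ⋀M by γₓ(u) = (B x) ⌋ u + ι(x) * u, where (B x) ⌋ · denotes left contraction of ⋀M by the linear functional B(x,·) and ι : M → ⋀M is the canonical embedding. Then for every u ∈ ⋀M one has γₓ(γₓ(u)) = B(x,x) • u. -/
/-- **Chevalley operator squares to the quadratic form.**
For a bilinear form `B` on an `R`-module `M`, the Chevalley operator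
`γₓ(u) = (B x) ⌋ u + ι(x) * u` on the exterior algebra satisfies
`γₓ(γₓ(u)) = B(x,x) • u`. -/
theorem chevalley_operator_sq
    (R : Type*) [CommRing R] (M : Type*) [AddCommGroup M] [Module R M]
    (B : M →ₗ[R] M →ₗ[R] R) (x : M)
    (γ : ExteriorAlgebra R M → ExteriorAlgebra R M)
    (hγ : ∀ u : ExteriorAlgebra R M,
      γ u = CliffordAlgebra.contractLeft (B x) u + ExteriorAlgebra.ι R x * u)
    (u : ExteriorAlgebra R M) :
    γ (γ u) = B x x • u := by
  rw [hγ, hγ, map_add, CliffordAlgebra.contractLeft_contractLeft,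
    CliffordAlgebra.contractLeft_ι_mul, mul_add, ← mul_assoc,
    ExteriorAlgebra.ι_sq_zero, zero_mul]
  abel
end

section
/- Let R be a commutative ring, M an R-module, and B : M →ₗ[R] M →ₗ[R] R a bilinear form, and let Q be the quadratic form Q(x) = B(x,x) on M. The Chevalley operators γₓ(u) = (B x) ⌋ u + ι(x) * u on the exterior algebra ⋀M lift to an R-algebra homomorphism ρ : CliffordAlgebra Q → Module.End R (⋀M) such that ρ(ι_Q(x)) = γₓ for all x ∈ M (where ι_Q : M → CliffordAlgebra Q is the canonical embedding); this gives a representation of the Clifford algebra of Q on the exterior algebra. -/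
/-!
On `⋀M = CliffordAlgebra 0`, the Chevalley operator `γₓ = (B x) ⌋ · + ι(x) * ·` is Mathlib's
`changeFormAux 0 (-B) x`, whose square is `(0 x - (-B) x x) • id = B x x • id`: the cross terms
cancel by the signed Leibniz rule, `ι(x)² = 0` and `(B x) ⌋ (B x) ⌋ · = 0`. Hence `x ↦ γₓ` satisfies
the Clifford relation for `Q` and lifts through the universal property.
-/

open CliffordAlgebra

namespace CliffordAlgebra

variable {R M : Type*} [CommRing R] [AddCommGroup M] [Module R M]

theorem changeFormAux_mul_self (Q : QuadraticForm R M) (B : LinearMap.BilinForm R M) (x : M) :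
    changeFormAux Q B x * changeFormAux Q B x = algebraMap R _ (Q x - B x x) :=
  LinearMap.ext <| changeFormAux_changeFormAux Q B x

end CliffordAlgebra

namespace ExteriorAlgebra

variable {R M : Type*} [CommRing R] [AddCommGroup M] [Module R M]

def chevalleyOperator (B : LinearMap.BilinForm R M) :
    M →ₗ[R] Module.End R (ExteriorAlgebra R M) :=
  changeFormAux 0 (-B)

theorem chevalleyOperator_apply (B : LinearMap.BilinForm R M) (x : M) (u : ExteriorAlgebra R M) :
    chevalleyOperator B x u = contractLeft (B x) u + ι R x * u := by
  rw [chevalleyOperator, changeFormAux_apply_apply, LinearMap.neg_apply, map_neg,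
    LinearMap.neg_apply, sub_neg_eq_add, add_comm]

theorem chevalleyOperator_mul_self (B : LinearMap.BilinForm R M) (x : M) :
    chevalleyOperator B x * chevalleyOperator B x = algebraMap R _ (B x x) := by
  rw [chevalleyOperator, changeFormAux_mul_self, zero_apply, LinearMap.neg_apply,
    LinearMap.neg_apply, zero_sub, neg_neg]

end ExteriorAlgebra

/-- **The Chevalley operators give a representation of the Clifford algebra on the
exterior algebra.**  For a bilinear form `B` on `M` and the quadratic form
`Q x = B x x`, there is an `R`-algebra homomorphism
`ρ : CliffordAlgebra Q → Module.End R (⋀M)` with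
`ρ(ι_Q x) u = (B x) ⌋ u + ι(x) * u` for all `x ∈ M`, `u ∈ ⋀M`. -/
theorem clifford_rep_on_exterior
    (R : Type*) [CommRing R] (M : Type*) [AddCommGroup M] [Module R M]
    (B : M →ₗ[R] M →ₗ[R] R) (Q : QuadraticForm R M) (hQ : ∀ x : M, Q x = B x x) :
    ∃ ρ : CliffordAlgebra Q →ₐ[R] Module.End R (ExteriorAlgebra R M),
      ∀ (x : M) (u : ExteriorAlgebra R M),
        ρ (CliffordAlgebra.ι Q x) u =
          CliffordAlgebra.contractLeft (B x) u + ExteriorAlgebra.ι R x * u := by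
  have hγ (x : M) : ExteriorAlgebra.chevalleyOperator B x * ExteriorAlgebra.chevalleyOperator B x =
      algebraMap R _ (Q x) := by
    rw [ExteriorAlgebra.chevalleyOperator_mul_self, hQ]
  refine ⟨lift Q ⟨ExteriorAlgebra.chevalleyOperator B, hγ⟩, fun x u => ?_⟩
  rw [lift_ι_apply, ExteriorAlgebra.chevalleyOperator_apply]
end

section
/- Let k be a nontrivial commutative ring and let b = (b_{ij}) and p = (p_{ij}) be 2×2 matrices over k. The matrix S_bc is a scalar multiple of S_GR (i.e., there exists c ∈ k with S_bc = c • S_GR) if and only if b₁₂ = b₂₁ and p₁₂ = p₂₁; moreover, in that case S_bc = S_GR. (The antipode of a Clifford bi-convolution in dimension 2 agrees, up to a factor, with the Grassmann antipode if and only if the cliffordization is performed with a symmetric scalar product and a symmetric coscalar product.) -/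
/-- The Grassmann antipode (grade involution) in the basis `1, e1, e2, e1∧e2`. -/
def SGR (k : Type*) [CommRing k] : Matrix (Fin 4) (Fin 4) k :=
  !![1, 0, 0, 0;
     0, -1, 0, 0;
     0, 0, -1, 0;
     0, 0, 0, 1]

/-- The (normalized) antipode of the Clifford bi-convolution with scalar product `b`
and coscalar product `p`, as computed by BIGEBRA. -/
def Sbc {k : Type*} [CommRing k] (b p : Matrix (Fin 2) (Fin 2) k) :
    Matrix (Fin 4) (Fin 4) k :=
  !![1 + (p 0 1 - p 1 0) * (b 0 1 - b 1 0), 0, 0, b 0 1 - b 1 0;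
     0, -1, 0, 0;
     0, 0, -1, 0;
     p 0 1 - p 1 0, 0, 0, 1]

lemma sbc_aux_fwd {k : Type*} [CommRing k] (b p : Matrix (Fin 2) (Fin 2) k)
    (h : ∃ c : k, Sbc b p = c • SGR k) : b 0 1 = b 1 0 ∧ p 0 1 = p 1 0 := by
  obtain ⟨c, h⟩ := h
  have h03 := congrFun (congrFun h 0) 3
  have h30 := congrFun (congrFun h 3) 0
  simp [Sbc, SGR, Matrix.smul_apply, Matrix.vecHead, Matrix.vecTail] at h03 h30
  exact ⟨sub_eq_zero.mp h03, sub_eq_zero.mp h30⟩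

lemma sbc_aux_bwd {k : Type*} [CommRing k] (b p : Matrix (Fin 2) (Fin 2) k)
    (hb : b 0 1 = b 1 0) (hp : p 0 1 = p 1 0) : Sbc b p = SGR k := by
  ext i j
  fin_cases i <;> fin_cases j <;> simp [Sbc, SGR, hb, hp]

/-- **(dim V = 2)** The antipode `S_bc` of a Clifford bi-convolution is, up to a factor,
identical with the Grassmann antipode `S_GR` if and only if the scalar product `b` and
the coscalar product `p` are symmetric; and in that case `S_bc = S_GR`. -/
theorem sbc_scalar_multiple_of_sgr_iff_symmetric
    (k : Type*) [CommRing k] [Nontrivial k] (b p : Matrix (Fin 2) (Fin 2) k) :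
    ((∃ c : k, Sbc b p = c • SGR k) ↔ (b 0 1 = b 1 0 ∧ p 0 1 = p 1 0)) ∧
      ((∃ c : k, Sbc b p = c • SGR k) → Sbc b p = SGR k) := by
  refine ⟨⟨sbc_aux_fwd b p, ?_⟩, fun h => ?_⟩
  · rintro ⟨hb, hp⟩
    exact ⟨1, by rw [one_smul]; exact sbc_aux_bwd b p hb hp⟩
  · obtain ⟨hb, hp⟩ := sbc_aux_fwd b p h
    exact sbc_aux_bwd b p hb hp
end

section
/- Let k be a nontrivial commutative ring and let b = (b_{ij}) and p = (p_{ij}) be 2×2 matrices over k. The matrix S_bc fixes the first standard basis vector e₀ of k⁴ (i.e., S_bc · e₀ = e₀, which expresses the condition S(1) = 1 required by the Milnor–Moore recursive formula for the antipode) if and only if p₁₂ = p₂₁. Consequently, the Milnor–Moore recursion S(x) = ε(x) − x − S(x′₍₁₎)x′₍₂₎ with S(1) = 1 cannot compute the antipode of a Clifford bi-convolution whose coscalar product has a nonzero antisymmetric part. -/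
open Matrix

theorem Sbc_mulVec_single_zero {k : Type*} [CommRing k] (b p : Matrix (Fin 2) (Fin 2) k) :
    Sbc b p *ᵥ Pi.single 0 1 =
      ![1 + (p 0 1 - p 1 0) * (b 0 1 - b 1 0), 0, 0, p 0 1 - p 1 0] := by
  rw [mulVec_single_one]
  ext i
  fin_cases i <;> rfl

theorem vecCons_one_add_mul_eq_single_zero_iff {k : Type*} [Semiring k] (c d : k) :
    ![1 + d * c, 0, 0, d] = Pi.single 0 1 ↔ d = 0 := by
  constructor
  · intro h
    simpa using congrFun h 3
  · rintro rfl
    ext i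
    fin_cases i <;> simp

theorem sbc_fixes_unit_iff_coscalar_symmetric_general
    (k : Type*) [CommRing k] (b p : Matrix (Fin 2) (Fin 2) k) :
    (Sbc b p).mulVec (Pi.single 0 1) = Pi.single 0 1 ↔ p 0 1 = p 1 0 := by
  rw [Sbc_mulVec_single_zero, vecCons_one_add_mul_eq_single_zero_iff, sub_eq_zero]

/-- **(dim V = 2)** The antipode `S_bc` of a Clifford bi-convolution fixes the first
standard basis vector `e₀` of `k⁴` (the condition `S(1) = 1` required by the
Milnor–Moore recursion for the antipode) if and only if the coscalar product `p`
is symmetric.  Hence the Milnor–Moore recursion cannot compute the antipode when the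
coscalar product has a nonzero antisymmetric part. -/
theorem sbc_fixes_unit_iff_coscalar_symmetric
    (k : Type*) [CommRing k] [Nontrivial k] (b p : Matrix (Fin 2) (Fin 2) k) :
    (Sbc b p).mulVec (Pi.single 0 1) = Pi.single 0 1 ↔ p 0 1 = p 1 0 :=
  sbc_fixes_unit_iff_coscalar_symmetric_general k b p
end

section
/- Let k be a commutative ring in which 2 is invertible, V = k² with standard basis e1, e2, and B a bilinear form on V with matrix (b_{ij}). Let ∘_B denote the Clifford product on ⋀V associated to B. Then the grade involution α of ⋀V satisfies the antipode equation for the Clifford convolution — that is, Σ α(x₍₁₎) ∘_B x₍₂₎ = ε(x)·1 for all x ∈ ⋀V, where Δ(x) = Σ x₍₁₎ ⊗ x₍₂₎ is the Grassmann coproduct — if and only if B is symmetric, i.e., b₁₂ = b₂₁. -/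
/-! On `1` and on the generators `eᵢ`, which are primitive for `Δ`, the convolution
`Σ α(x₍₁₎) ∘_B x₍₂₎` returns `ε(x)` for every `B`, since `α(eᵢ) ∘_B 1 + 1 ∘_B eᵢ = 0`. On
`e1 ∧ e2` the wedge parts of the four terms cancel and only the contractions survive, leaving
`B(e2, e1) − B(e1, e2)`. As `1, e1, e2, e1 ∧ e2` span `⋀V`, the antipode equation holds exactly
when this scalar vanishes. -/

open scoped TensorProduct

/-- The cliffordized (Rota–Stein) product on the exterior algebra `⋀V` associated to a
bilinear form `B` on `V`, as a linear map `⋀V ⊗ ⋀V →ₗ ⋀V`: the multiplication of the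
Clifford algebra of the quadratic form `x ↦ B x x` transported back to `⋀V` along
Chevalley's linear isomorphism (`changeFormEquiv`) determined by `B`. -/
noncomputable def cliffordMul {k : Type*} [CommRing k]
    (B : LinearMap.BilinForm k (Fin 2 → k)) :
    ExteriorAlgebra k (Fin 2 → k) ⊗[k] ExteriorAlgebra k (Fin 2 → k) →ₗ[k]
      ExteriorAlgebra k (Fin 2 → k) :=
  letI e : ExteriorAlgebra k (Fin 2 → k) ≃ₗ[k] CliffordAlgebra B.toQuadraticMap :=
    CliffordAlgebra.changeFormEquiv (Q := (0 : QuadraticForm k (Fin 2 → k)))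
      (Q' := B.toQuadraticMap) (B := B) (sub_zero B.toQuadraticMap).symm
  e.symm.toLinearMap ∘ₗ LinearMap.mul' k (CliffordAlgebra B.toQuadraticMap) ∘ₗ
    TensorProduct.map e.toLinearMap e.toLinearMap

namespace ExteriorAlgebra

variable {R M : Type*} [CommRing R] [AddCommGroup M] [Module R M]

theorem algebraMapInv_ι (m : M) : algebraMapInv (ι R m) = 0 := by
  simp [algebraMapInv]

theorem span_one_ι_ι_mul_eq_top {u w : M} (h : Submodule.span R {u, w} = ⊤) :
    Submodule.span R {1, ι R u, ι R w, ι R u * ι R w} = ⊤ := by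
  set S := Submodule.span R {1, ι R u, ι R w, ι R u * ι R w}
  have mem : ∀ x ∈ ({1, ι R u, ι R w, ι R u * ι R w} : Set (ExteriorAlgebra R M)), x ∈ S :=
    fun _ hx => Submodule.subset_span hx
  have swap : ι R w * ι R u = -(ι R u * ι R w) := eq_neg_of_add_eq_zero_left (ι_add_mul_swap w u)
  have u_mul_top : ι R u * (ι R u * ι R w) = 0 := by rw [← mul_assoc, ι_sq_zero, zero_mul]
  have w_mul_top : ι R w * (ι R u * ι R w) = 0 := by
    rw [← mul_assoc, swap, neg_mul, mul_assoc, ι_sq_zero, mul_zero, neg_zero]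
  have mulLeft_mem : ∀ v ∈ ({u, w} : Set M), ∀ x ∈ S, ι R v * x ∈ S := by
    rintro v hv x hx
    refine (Submodule.span_le (p := S.comap (LinearMap.mulLeft R (ι R v)))).mpr ?_ hx
    rcases hv with rfl | rfl <;> rintro _ (rfl | rfl | rfl | rfl) <;>
      simp [swap, u_mul_top, w_mul_top, mem, S.zero_mem, S.neg_mem]
  rw [Submodule.eq_top_iff']
  intro x
  induction x using CliffordAlgebra.left_induction with
  | algebraMap r => simpa [Algebra.algebraMap_eq_smul_one] using S.smul_mem r (mem 1 (by simp))
  | add _ _ hx hy => exact S.add_mem hx hy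
  | ι_mul x m hx =>
    obtain ⟨a, b, rfl⟩ := Submodule.mem_span_pair.mp (h ▸ Submodule.mem_top (x := m))
    simp only [map_add, map_smul, add_mul, smul_mul_assoc]
    exact S.add_mem (S.smul_mem a (mulLeft_mem u (by simp) x hx))
      (S.smul_mem b (mulLeft_mem w (by simp) x hx))

end ExteriorAlgebra

theorem span_pi_single_fin_two_eq_top (k : Type*) [CommRing k] :
    Submodule.span k {(Pi.single 0 1 : Fin 2 → k), Pi.single 1 1} = ⊤ := by
  rw [← (Pi.basisFun k (Fin 2)).span_eq]
  congr 1
  ext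
  simp [Fin.exists_fin_two, eq_comm]

section CliffordProduct

variable {k : Type*} [CommRing k] (B : LinearMap.BilinForm k (Fin 2 → k))

local notation "⋀V" => ExteriorAlgebra k (Fin 2 → k)

noncomputable def chevalleyEquiv : ⋀V ≃ₗ[k] CliffordAlgebra B.toQuadraticMap :=
  CliffordAlgebra.changeFormEquiv (Q := (0 : QuadraticForm k (Fin 2 → k)))
    (Q' := B.toQuadraticMap) (B := B) (sub_zero B.toQuadraticMap).symm

theorem cliffordMul_tmul (a b : ⋀V) :
    cliffordMul B (a ⊗ₜ[k] b) =
      (chevalleyEquiv B).symm (chevalleyEquiv B a * chevalleyEquiv B b) :=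
  rfl

theorem chevalleyEquiv_one : chevalleyEquiv B 1 = 1 :=
  CliffordAlgebra.changeForm_one (sub_zero _).symm

theorem chevalleyEquiv_ι (v : Fin 2 → k) :
    chevalleyEquiv B (ExteriorAlgebra.ι k v) = CliffordAlgebra.ι B.toQuadraticMap v :=
  CliffordAlgebra.changeForm_ι (sub_zero _).symm v

theorem cliffordMul_one_tmul (b : ⋀V) : cliffordMul B (1 ⊗ₜ[k] b) = b := by
  rw [cliffordMul_tmul, chevalleyEquiv_one, one_mul, LinearEquiv.symm_apply_apply]

theorem cliffordMul_tmul_one (a : ⋀V) : cliffordMul B (a ⊗ₜ[k] 1) = a := by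
  rw [cliffordMul_tmul, chevalleyEquiv_one, mul_one, LinearEquiv.symm_apply_apply]

theorem cliffordMul_ι_tmul_ι (v w : Fin 2 → k) :
    cliffordMul B (ExteriorAlgebra.ι k v ⊗ₜ[k] ExteriorAlgebra.ι k w) =
      ExteriorAlgebra.ι k v * ExteriorAlgebra.ι k w + algebraMap k ⋀V (B v w) := by
  rw [cliffordMul_tmul, chevalleyEquiv_ι, chevalleyEquiv_ι, LinearEquiv.symm_apply_eq]
  simp only [chevalleyEquiv, CliffordAlgebra.changeFormEquiv_apply, map_add,
    CliffordAlgebra.changeForm_ι_mul_ι, CliffordAlgebra.changeForm_algebraMap, sub_add_cancel]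

noncomputable def involuteConvolution (Δ : ⋀V →ₗ[k] ⋀V ⊗[k] ⋀V) : ⋀V →ₗ[k] ⋀V :=
  cliffordMul B ∘ₗ
    TensorProduct.map
      (CliffordAlgebra.involute (Q := (0 : QuadraticForm k (Fin 2 → k)))).toLinearMap
      LinearMap.id ∘ₗ Δ

variable {B} {Δ : ExteriorAlgebra k (Fin 2 → k) →ₗ[k]
  ExteriorAlgebra k (Fin 2 → k) ⊗[k] ExteriorAlgebra k (Fin 2 → k)}

theorem involuteConvolution_one (hΔ : Δ 1 = 1 ⊗ₜ[k] 1) : involuteConvolution B Δ 1 = 1 := by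
  simp [involuteConvolution, hΔ, cliffordMul_one_tmul]

theorem involuteConvolution_ι {v : Fin 2 → k}
    (hΔ : Δ (ExteriorAlgebra.ι k v) =
      ExteriorAlgebra.ι k v ⊗ₜ[k] 1 + 1 ⊗ₜ[k] ExteriorAlgebra.ι k v) :
    involuteConvolution B Δ (ExteriorAlgebra.ι k v) = 0 := by
  simp [involuteConvolution, hΔ, TensorProduct.neg_tmul, cliffordMul_one_tmul,
    cliffordMul_tmul_one]

theorem involuteConvolution_ι_mul_ι {u w : Fin 2 → k}
    (hΔ : Δ (ExteriorAlgebra.ι k u * ExteriorAlgebra.ι k w) =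
      1 ⊗ₜ[k] (ExteriorAlgebra.ι k u * ExteriorAlgebra.ι k w)
      + ExteriorAlgebra.ι k u ⊗ₜ[k] ExteriorAlgebra.ι k w
      - ExteriorAlgebra.ι k w ⊗ₜ[k] ExteriorAlgebra.ι k u
      + (ExteriorAlgebra.ι k u * ExteriorAlgebra.ι k w) ⊗ₜ[k] 1) :
    involuteConvolution B Δ (ExteriorAlgebra.ι k u * ExteriorAlgebra.ι k w) =
      algebraMap k ⋀V (B w u - B u w) := by
  have swap : ExteriorAlgebra.ι k w * ExteriorAlgebra.ι k u =
      -(ExteriorAlgebra.ι k u * ExteriorAlgebra.ι k w) :=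
    eq_neg_of_add_eq_zero_left (ExteriorAlgebra.ι_add_mul_swap w u)
  simp only [involuteConvolution, LinearMap.comp_apply, hΔ, map_add, map_sub,
    TensorProduct.map_tmul, AlgHom.toLinearMap_apply, LinearMap.id_apply, map_one, map_mul,
    CliffordAlgebra.involute_ι, neg_mul_neg, TensorProduct.neg_tmul, map_neg,
    cliffordMul_one_tmul, cliffordMul_tmul_one, cliffordMul_ι_tmul_ι, swap]
  abel

end CliffordProduct

theorem grade_involution_clifford_antipode_iff_symmetric_general
    (k : Type*) [CommRing k]
    (e1 e2 : Fin 2 → k) (he1 : e1 = Pi.single 0 1) (he2 : e2 = Pi.single 1 1)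
    (B : LinearMap.BilinForm k (Fin 2 → k))
    (Δ : ExteriorAlgebra k (Fin 2 → k) →ₗ[k]
          ExteriorAlgebra k (Fin 2 → k) ⊗[k] ExteriorAlgebra k (Fin 2 → k))
    (hΔ1 : Δ 1 = 1 ⊗ₜ[k] 1)
    (hΔe1 : Δ (ExteriorAlgebra.ι k e1) =
      ExteriorAlgebra.ι k e1 ⊗ₜ[k] 1 + 1 ⊗ₜ[k] ExteriorAlgebra.ι k e1)
    (hΔe2 : Δ (ExteriorAlgebra.ι k e2) =
      ExteriorAlgebra.ι k e2 ⊗ₜ[k] 1 + 1 ⊗ₜ[k] ExteriorAlgebra.ι k e2)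
    (hΔ12 : Δ (ExteriorAlgebra.ι k e1 * ExteriorAlgebra.ι k e2) =
      1 ⊗ₜ[k] (ExteriorAlgebra.ι k e1 * ExteriorAlgebra.ι k e2)
      + ExteriorAlgebra.ι k e1 ⊗ₜ[k] ExteriorAlgebra.ι k e2
      - ExteriorAlgebra.ι k e2 ⊗ₜ[k] ExteriorAlgebra.ι k e1
      + (ExteriorAlgebra.ι k e1 * ExteriorAlgebra.ι k e2) ⊗ₜ[k] 1) :
    (∀ x : ExteriorAlgebra k (Fin 2 → k),
        cliffordMul B
          (TensorProduct.map
            (CliffordAlgebra.involute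
              (Q := (0 : QuadraticForm k (Fin 2 → k)))).toLinearMap
            LinearMap.id (Δ x))
        = algebraMap k (ExteriorAlgebra k (Fin 2 → k))
            (ExteriorAlgebra.algebraMapInv x))
      ↔ B e1 e2 = B e2 e1 := by
  have h12 := involuteConvolution_ι_mul_ι (B := B) hΔ12
  refine ⟨fun h => ?_, fun hB x => ?_⟩
  · have hsub : algebraMap k (ExteriorAlgebra k (Fin 2 → k)) (B e2 e1 - B e1 e2) = 0 := by
      rw [← h12, involuteConvolution, LinearMap.comp_apply, LinearMap.comp_apply, h]
      simp [ExteriorAlgebra.algebraMapInv_ι]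
    exact (sub_eq_zero.mp ((ExteriorAlgebra.algebraMap_eq_zero_iff _ _).mp hsub)).symm
  · have hspan := ExteriorAlgebra.span_one_ι_ι_mul_eq_top
      (he1 ▸ he2 ▸ span_pi_single_fin_two_eq_top k)
    refine LinearMap.congr_fun (LinearMap.ext_on hspan (f := involuteConvolution B Δ)
      (g := Algebra.linearMap k _ ∘ₗ ExteriorAlgebra.algebraMapInv.toLinearMap) ?_) x
    rintro _ (rfl | rfl | rfl | rfl) <;>
      simp [involuteConvolution_one hΔ1, involuteConvolution_ι hΔe1, involuteConvolution_ι hΔe2,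
        h12, hB, ExteriorAlgebra.algebraMapInv_ι]

/-- **(dim V = 2, 2 invertible)** The grade involution `α` of `⋀V` satisfies the antipode
equation for the Clifford convolution, `Σ α(x₍₁₎) ∘_B x₍₂₎ = ε(x)·1` for all `x ∈ ⋀V`
(with `Δ` the Grassmann coproduct), if and only if the bilinear form `B` is symmetric. -/
theorem grade_involution_clifford_antipode_iff_symmetric
    (k : Type*) [CommRing k] [Invertible (2 : k)]
    (e1 e2 : Fin 2 → k) (he1 : e1 = Pi.single 0 1) (he2 : e2 = Pi.single 1 1)
    (B : LinearMap.BilinForm k (Fin 2 → k))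
    (Δ : ExteriorAlgebra k (Fin 2 → k) →ₗ[k]
          ExteriorAlgebra k (Fin 2 → k) ⊗[k] ExteriorAlgebra k (Fin 2 → k))
    (hΔ1 : Δ 1 = 1 ⊗ₜ[k] 1)
    (hΔe1 : Δ (ExteriorAlgebra.ι k e1) =
      ExteriorAlgebra.ι k e1 ⊗ₜ[k] 1 + 1 ⊗ₜ[k] ExteriorAlgebra.ι k e1)
    (hΔe2 : Δ (ExteriorAlgebra.ι k e2) =
      ExteriorAlgebra.ι k e2 ⊗ₜ[k] 1 + 1 ⊗ₜ[k] ExteriorAlgebra.ι k e2)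
    (hΔ12 : Δ (ExteriorAlgebra.ι k e1 * ExteriorAlgebra.ι k e2) =
      1 ⊗ₜ[k] (ExteriorAlgebra.ι k e1 * ExteriorAlgebra.ι k e2)
      + ExteriorAlgebra.ι k e1 ⊗ₜ[k] ExteriorAlgebra.ι k e2
      - ExteriorAlgebra.ι k e2 ⊗ₜ[k] ExteriorAlgebra.ι k e1
      + (ExteriorAlgebra.ι k e1 * ExteriorAlgebra.ι k e2) ⊗ₜ[k] 1) :
    (∀ x : ExteriorAlgebra k (Fin 2 → k),
        cliffordMul B
          (TensorProduct.map
            (CliffordAlgebra.involute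
              (Q := (0 : QuadraticForm k (Fin 2 → k)))).toLinearMap
            LinearMap.id (Δ x))
        = algebraMap k (ExteriorAlgebra k (Fin 2 → k))
            (ExteriorAlgebra.algebraMapInv x))
      ↔ B e1 e2 = B e2 e1 :=
  grade_involution_clifford_antipode_iff_symmetric_general k e1 e2 he1 he2 B Δ hΔ1 hΔe1 hΔe2 hΔ12
end

section
/- Let k be a commutative ring in which 2 is invertible, V = k² with standard basis e1, e2, and K a bilinear form on V. Then the cliffordizations with respect to K and −K are convolutive inverses of each other with respect to the Grassmann Hopf convolution: for all x, y ∈ ⋀V, Σ ε(x₍₁₎ ∘_K y₍₂₎) · ε(x₍₂₎ ∘_{−K} y₍₁₎) = ε(x) · ε(y), where Δ(x) = Σ x₍₁₎ ⊗ x₍₂₎ and Δ(y) = Σ y₍₁₎ ⊗ y₍₂₎ are the Grassmann coproducts of x and y. -/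
open scoped TensorProduct
open CliffordAlgebra

section Aux
variable {k : Type*} [CommRing k] (B : LinearMap.BilinForm k (Fin 2 → k))

local notation "E" => ExteriorAlgebra k (Fin 2 → k)
local notation "ε" => ExteriorAlgebra.algebraMapInv (R := k) (M := Fin 2 → k)

lemma hB : B.toQuadraticMap = B.toQuadraticMap - (0 : QuadraticForm k (Fin 2 → k)) :=
  (sub_zero _).symm

-- the map back
noncomputable def chB : CliffordAlgebra B.toQuadraticMap →ₗ[k] E :=
  changeForm (changeForm.neg_proof (hB B))

lemma cliffordMul_tmul_s7 (u v : E) :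
    cliffordMul B (u ⊗ₜ[k] v) =
      chB B (changeForm (hB B) u * changeForm (hB B) v) := rfl

@[simp] lemma eps_iota (a : Fin 2 → k) : ε (ExteriorAlgebra.ι k a) = 0 := by
  simp [ExteriorAlgebra.algebraMapInv]

@[simp] lemma eps_algebraMap (r : k) : ε (algebraMap k _ r) = r :=
  ExteriorAlgebra.algebraMap_leftInverse _ r

@[simp] lemma eps_iota_mul (a : Fin 2 → k) (x : E) : ε (ExteriorAlgebra.ι k a * x) = 0 := by
  rw [map_mul, eps_iota, zero_mul]

@[simp] lemma eps_contract (d : Module.Dual k (Fin 2 → k)) (a : Fin 2 → k) :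
    ε (contractLeft (Q := (0 : QuadraticForm k (Fin 2 → k))) d (ExteriorAlgebra.ι k a))
      = d a := by
  rw [show (ExteriorAlgebra.ι k a : E) = CliffordAlgebra.ι 0 a from rfl, contractLeft_ι]
  simp

end Aux

section Aux2
variable {k : Type*} [CommRing k] (B : LinearMap.BilinForm k (Fin 2 → k))

local notation "E" => ExteriorAlgebra k (Fin 2 → k)
local notation "ε" => ExteriorAlgebra.algebraMapInv (R := k) (M := Fin 2 → k)
local notation "ιE" => ExteriorAlgebra.ι k
local notation "ιC" => CliffordAlgebra.ι (LinearMap.BilinMap.toQuadraticMap B)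

-- contraction lemmas in the exterior algebra
@[simp] lemma con_one (d : Module.Dual k (Fin 2 → k)) :
    contractLeft (Q := (0 : QuadraticForm k (Fin 2 → k))) d (1 : E) = 0 :=
  contractLeft_one _ _

@[simp] lemma con_algebraMap (d : Module.Dual k (Fin 2 → k)) (r : k) :
    contractLeft (Q := (0 : QuadraticForm k (Fin 2 → k))) d (algebraMap k E r) = 0 :=
  contractLeft_algebraMap _ _ _

@[simp] lemma con_iota_mul (d : Module.Dual k (Fin 2 → k)) (a : Fin 2 → k) (x : E) :
    contractLeft (Q := (0 : QuadraticForm k (Fin 2 → k))) d (ιE a * x)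
      = d a • x - ιE a * contractLeft (Q := (0 : QuadraticForm k (Fin 2 → k))) d x :=
  contractLeft_ι_mul _ _ _

-- chB lemmas
@[simp] lemma chB_one : chB B (1 : CliffordAlgebra B.toQuadraticMap) = 1 :=
  changeForm_one _

@[simp] lemma chB_algebraMap (r : k) : chB B (algebraMap k _ r) = algebraMap k E r :=
  changeForm_algebraMap _ _

@[simp] lemma chB_iota (a : Fin 2 → k) : chB B (ιC a) = ιE a :=
  changeForm_ι _ _

lemma chB_iota_mul (a : Fin 2 → k) (x : CliffordAlgebra B.toQuadraticMap) :
    chB B (ιC a * x) = ιE a * chB B x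
      + contractLeft (Q := (0 : QuadraticForm k (Fin 2 → k))) (B a) (chB B x) := by
  rw [chB, changeForm_ι_mul]
  simp [sub_eq_add_neg]

-- the four scalar-part values
lemma epsC_iota (a : Fin 2 → k) : ε (chB B (ιC a)) = 0 := by simp

lemma epsC_iota_iota (a b : Fin 2 → k) : ε (chB B (ιC a * ιC b)) = B a b := by
  rw [chB_iota_mul]; simp

lemma epsC_three (a b c : Fin 2 → k) :
    ε (chB B (ιC a * (ιC b * ιC c))) = 0 := by
  rw [chB_iota_mul, chB_iota_mul]
  simp [mul_sub, mul_add, smul_sub]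

lemma epsC_four (a b c d : Fin 2 → k) :
    ε (chB B (ιC a * (ιC b * (ιC c * ιC d)))) =
      B a b * (B c d) + B b c * B a d - B b d * B a c := by
  rw [chB_iota_mul, chB_iota_mul, chB_iota_mul]
  simp [mul_sub, mul_add, smul_sub, smul_smul, mul_comm]
  ring

end Aux2

section Aux3
variable {k : Type*} [CommRing k] (B : LinearMap.BilinForm k (Fin 2 → k))

local notation "E" => ExteriorAlgebra k (Fin 2 → k)
local notation "ε" => ExteriorAlgebra.algebraMapInv (R := k) (M := Fin 2 → k)
local notation "ιE" => ExteriorAlgebra.ι k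
local notation "ιC" => CliffordAlgebra.ι (LinearMap.BilinMap.toQuadraticMap B)

attribute [local simp] epsC_iota epsC_iota_iota epsC_three epsC_four

@[simp] lemma phi_one_left (v : E) : cliffordMul B ((1 : E) ⊗ₜ[k] v) = v := by
  rw [cliffordMul_tmul_s7, changeForm_one, one_mul]
  exact (changeFormEquiv (hB B)).symm_apply_apply v

@[simp] lemma phi_one_right (u : E) : cliffordMul B (u ⊗ₜ[k] (1 : E)) = u := by
  rw [cliffordMul_tmul_s7, changeForm_one, mul_one]
  exact (changeFormEquiv (hB B)).symm_apply_apply u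

@[simp] lemma phi_vv (a b : Fin 2 → k) :
    ε (cliffordMul B (ιE a ⊗ₜ[k] ιE b)) = B a b := by
  rw [cliffordMul_tmul_s7, changeForm_ι, changeForm_ι, epsC_iota_iota]

@[simp] lemma phi_v2 (a b c : Fin 2 → k) :
    ε (cliffordMul B (ιE a ⊗ₜ[k] (ιE b * ιE c))) = 0 := by
  rw [cliffordMul_tmul_s7, changeForm_ι, changeForm_ι_mul_ι]
  simp [mul_sub, sub_mul, mul_assoc, Algebra.algebraMap_eq_smul_one, smul_mul_assoc,
    mul_smul_comm, smul_smul]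

@[simp] lemma phi_2v (a b c : Fin 2 → k) :
    ε (cliffordMul B ((ιE a * ιE b) ⊗ₜ[k] ιE c)) = 0 := by
  rw [cliffordMul_tmul_s7, changeForm_ι, changeForm_ι_mul_ι]
  simp [mul_sub, sub_mul, mul_assoc, Algebra.algebraMap_eq_smul_one, smul_mul_assoc,
    mul_smul_comm, smul_smul]

@[simp] lemma phi_22 (a b c d : Fin 2 → k) :
    ε (cliffordMul B ((ιE a * ιE b) ⊗ₜ[k] (ιE c * ιE d))) =
      B a d * B b c - B a c * B b d := by
  rw [cliffordMul_tmul_s7, changeForm_ι_mul_ι, changeForm_ι_mul_ι]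
  simp [mul_sub, sub_mul, mul_assoc, Algebra.algebraMap_eq_smul_one, smul_mul_assoc,
    mul_smul_comm, smul_smul]
  ring

end Aux3

section Span
variable {k : Type*} [CommRing k]

local notation "E" => ExteriorAlgebra k (Fin 2 → k)
local notation "ιE" => ExteriorAlgebra.ι k

lemma iota_swap (x y : Fin 2 → k) : ιE y * ιE x = -(ιE x * ιE y) :=
  eq_neg_of_add_eq_zero_left (ExteriorAlgebra.ι_add_mul_swap y x)

lemma span_mul_closed (e1 e2 : Fin 2 → k) :
    ∀ u ∈ Submodule.span k {(1 : E), ιE e1, ιE e2, ιE e1 * ιE e2},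
    ∀ v ∈ Submodule.span k {(1 : E), ιE e1, ιE e2, ιE e1 * ιE e2},
      u * v ∈ Submodule.span k {(1 : E), ιE e1, ιE e2, ιE e1 * ιE e2} := by
  set a := ιE e1
  set b := ιE e2
  set S := Submodule.span k {(1 : E), a, b, a * b} with hS
  have m1 : (1 : E) ∈ S := Submodule.subset_span (by simp)
  have ma : a ∈ S := Submodule.subset_span (by simp)
  have mb : b ∈ S := Submodule.subset_span (by simp)
  have mab : a * b ∈ S := Submodule.subset_span (by simp)
  have haa : a * a = 0 := ExteriorAlgebra.ι_sq_zero e1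
  have hbb : b * b = 0 := ExteriorAlgebra.ι_sq_zero e2
  have hba : b * a = -(a * b) := iota_swap e1 e2
  have haab : a * (a * b) = 0 := by rw [← mul_assoc, haa, zero_mul]
  have hbab : b * (a * b) = 0 := by
    rw [← mul_assoc, hba, neg_mul, mul_assoc, hbb, mul_zero, neg_zero]
  have haba : a * b * a = 0 := by
    rw [mul_assoc, hba, mul_neg, ← mul_assoc, haa, zero_mul, neg_zero]
  have habb : a * b * b = 0 := by rw [mul_assoc, hbb, mul_zero]
  have habab : a * b * (a * b) = 0 := by rw [mul_assoc, hbab, mul_zero]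
  intro u hu v hv
  induction hu using Submodule.span_induction with
  | zero => simpa using Submodule.zero_mem S
  | add x y _ _ hx hy => rw [add_mul]; exact Submodule.add_mem S hx hy
  | smul r x _ hx => rw [smul_mul_assoc]; exact Submodule.smul_mem S r hx
  | mem x hx =>
    induction hv using Submodule.span_induction with
    | zero => simpa using Submodule.zero_mem S
    | add y z _ _ hy hz => rw [mul_add]; exact Submodule.add_mem S hy hz
    | smul r y _ hy => rw [mul_smul_comm]; exact Submodule.smul_mem S r hy
    | mem y hy =>
      simp only [Set.mem_insert_iff, Set.mem_singleton_iff] at hx hy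
      rcases hx with rfl | rfl | rfl | rfl <;> rcases hy with rfl | rfl | rfl | rfl <;>
        (try simp only [one_mul, mul_one, haa, hbb, hba, haab, hbab, haba, habb, habab]) <;>
        first
          | exact Submodule.zero_mem S
          | exact Submodule.neg_mem S mab
          | assumption

lemma mem_span_four (e1 e2 : Fin 2 → k) (he1 : e1 = Pi.single 0 1)
    (he2 : e2 = Pi.single 1 1) (z : E) :
    z ∈ Submodule.span k {(1 : E), ιE e1, ιE e2, ιE e1 * ιE e2} := by
  set S := Submodule.span k {(1 : E), ιE e1, ιE e2, ιE e1 * ιE e2} with hS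
  have m1 : (1 : E) ∈ S := Submodule.subset_span (by simp)
  have ma : ιE e1 ∈ S := Submodule.subset_span (by simp)
  have mb : ιE e2 ∈ S := Submodule.subset_span (by simp)
  induction z using ExteriorAlgebra.induction with
  | algebraMap r =>
    rw [Algebra.algebraMap_eq_smul_one]
    exact Submodule.smul_mem S r m1
  | ι v =>
    have hv : v = v 0 • e1 + v 1 • e2 := by
      subst he1 he2
      funext i
      fin_cases i <;> simp
    rw [hv, map_add, map_smul, map_smul]
    exact Submodule.add_mem S (Submodule.smul_mem S _ ma) (Submodule.smul_mem S _ mb)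
  | mul x y hx hy => exact span_mul_closed e1 e2 x hx y hy
  | add x y hx hy => exact Submodule.add_mem S hx hy

end Span

set_option maxHeartbeats 1000000
set_option synthInstance.maxHeartbeats 400000

/-- **(dim V = 2, 2 invertible)** The cliffordizations with respect to `K` and `−K` are
convolutive inverses of each other w.r.t. the Grassmann Hopf convolution:
`Σ ε(x₍₁₎ ∘_K y₍₂₎) · ε(x₍₂₎ ∘_{−K} y₍₁₎) = ε(x)·ε(y)` for all `x, y ∈ ⋀V`,
where `Δ` is the Grassmann coproduct and `ε` the counit (scalar part). -/
theorem cliffordization_convolutive_inverse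
    (k : Type*) [CommRing k] [Invertible (2 : k)]
    (e1 e2 : Fin 2 → k) (he1 : e1 = Pi.single 0 1) (he2 : e2 = Pi.single 1 1)
    (K : LinearMap.BilinForm k (Fin 2 → k))
    (Δ : ExteriorAlgebra k (Fin 2 → k) →ₗ[k]
          ExteriorAlgebra k (Fin 2 → k) ⊗[k] ExteriorAlgebra k (Fin 2 → k))
    (hΔ1 : Δ 1 = 1 ⊗ₜ[k] 1)
    (hΔe1 : Δ (ExteriorAlgebra.ι k e1) =
      ExteriorAlgebra.ι k e1 ⊗ₜ[k] 1 + 1 ⊗ₜ[k] ExteriorAlgebra.ι k e1)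
    (hΔe2 : Δ (ExteriorAlgebra.ι k e2) =
      ExteriorAlgebra.ι k e2 ⊗ₜ[k] 1 + 1 ⊗ₜ[k] ExteriorAlgebra.ι k e2)
    (hΔ12 : Δ (ExteriorAlgebra.ι k e1 * ExteriorAlgebra.ι k e2) =
      1 ⊗ₜ[k] (ExteriorAlgebra.ι k e1 * ExteriorAlgebra.ι k e2)
      + ExteriorAlgebra.ι k e1 ⊗ₜ[k] ExteriorAlgebra.ι k e2
      - ExteriorAlgebra.ι k e2 ⊗ₜ[k] ExteriorAlgebra.ι k e1
      + (ExteriorAlgebra.ι k e1 * ExteriorAlgebra.ι k e2) ⊗ₜ[k] 1)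
    (x y : ExteriorAlgebra k (Fin 2 → k)) :
    -- `Σ ε(x₍₁₎ ∘_K y₍₂₎) · ε(x₍₂₎ ∘_{−K} y₍₁₎)`, expressed by rearranging
    -- `Δ x ⊗ Δ y = Σ (x₍₁₎ ⊗ x₍₂₎) ⊗ (y₍₁₎ ⊗ y₍₂₎)` into
    -- `Σ (x₍₁₎ ⊗ y₍₂₎) ⊗ (x₍₂₎ ⊗ y₍₁₎)` and applying `ε ∘ ∘_K` and `ε ∘ ∘_{−K}`:
    LinearMap.mul' k k
      (TensorProduct.map
        ((ExteriorAlgebra.algebraMapInv).toLinearMap ∘ₗ cliffordMul K)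
        ((ExteriorAlgebra.algebraMapInv).toLinearMap ∘ₗ cliffordMul (-K))
        (TensorProduct.tensorTensorTensorComm k
            (ExteriorAlgebra k (Fin 2 → k)) (ExteriorAlgebra k (Fin 2 → k))
            (ExteriorAlgebra k (Fin 2 → k)) (ExteriorAlgebra k (Fin 2 → k))
          (TensorProduct.map LinearMap.id
            (TensorProduct.comm k (ExteriorAlgebra k (Fin 2 → k))
              (ExteriorAlgebra k (Fin 2 → k))).toLinearMap
            (Δ x ⊗ₜ[k] Δ y))))
      = ExteriorAlgebra.algebraMapInv x * ExteriorAlgebra.algebraMapInv y := by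
  have hx := mem_span_four e1 e2 he1 he2 x
  have hy := mem_span_four e1 e2 he1 he2 y
  clear he1 he2
  induction hx using Submodule.span_induction with
  | zero =>
    simp only [map_zero, TensorProduct.zero_tmul, zero_mul]
  | add u v _ _ hu hv =>
    simp only [map_add, TensorProduct.add_tmul, add_mul]
    rw [hu, hv]
  | smul r u _ hu =>
    simp only [map_smul, ← TensorProduct.smul_tmul', smul_eq_mul]
    rw [hu]; ring
  | mem u hu =>
    induction hy using Submodule.span_induction with
    | zero =>
      simp only [map_zero, TensorProduct.tmul_zero, mul_zero]
    | add v w _ _ hv hw =>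
      simp only [map_add, TensorProduct.tmul_add, mul_add]
      rw [hv, hw]
    | smul r v _ hv =>
      simp only [map_smul, TensorProduct.tmul_smul, smul_eq_mul]
      rw [hv]; ring
    | mem v hv =>
      simp only [Set.mem_insert_iff, Set.mem_singleton_iff] at hu hv
      rcases hu with rfl | rfl | rfl | rfl <;> rcases hv with rfl | rfl | rfl | rfl <;>
      ·  simp only [hΔ1, hΔe1, hΔe2, hΔ12, map_add, map_sub, TensorProduct.add_tmul,
           TensorProduct.tmul_add, TensorProduct.sub_tmul, TensorProduct.tmul_sub,
           TensorProduct.map_tmul, TensorProduct.comm_tmul,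
           TensorProduct.tensorTensorTensorComm_tmul, LinearMap.mul'_apply,
           LinearMap.id_coe, id_eq, LinearEquiv.coe_coe, LinearMap.coe_comp,
           Function.comp_apply, AlgHom.toLinearMap_apply, phi_one_left, phi_one_right,
           phi_vv, phi_v2, phi_2v, phi_22, LinearMap.neg_apply, eps_iota, eps_iota_mul,
           map_one]
         try ring
end
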